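/- arXiv:2511.00895 — 4 statements merged into one kernel-verified Lean document; each statement's English description precedes it below -/
import Mathlib

section
/- Let η > 0 and let X1 and S1 be independent integrable random variables with S1 ≥ 0. For w ∈ [0,1] set Z1^w = wS1 + 1 − w and μ_w = w·E[S1] + 1 − w, and for capital levels R0^w, R0^0 ≥ 0 set C0^w = E[(R0^w·Z1^w − X1)^+]/(1+η), C0^0 = E[(R0^0 − X1)^+]/(1+η), V0^w = R0^w − C0^w and V0^0 = R0^0 − C0^0. If R0^w·μ_w ≥ R0^0 then C0^w ≥ C0^0. If moreover R0^0 ≥ R0^w, then V0^w ≤ V0^0. -/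
open MeasureTheory ProbabilityTheory Real Set

noncomputable def VaR {Ω : Type*} [MeasurableSpace Ω] (P : Measure Ω) (β : ℝ) (Y : Ω → ℝ) : ℝ :=
  sInf {y : ℝ | 1 - β ≤ (P {ω | -Y ω ≤ y}).toReal}

noncomputable def ES {Ω : Type*} [MeasurableSpace Ω] (P : Measure Ω) (α : ℝ) (Y : Ω → ℝ) : ℝ :=
  (1 / α) * ∫ β in (0:ℝ)..α, VaR P β Y

noncomputable def stdNormalCDF (x : ℝ) : ℝ := ((gaussianReal 0 1) (Iic x)).toReal

noncomputable def stdNormalPDF (x : ℝ) : ℝ := (Real.sqrt (2 * π))⁻¹ * Real.exp (-x ^ 2 / 2)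

/-!
The indicator `1{x < c}` is a subgradient of `y ↦ (y - x)⁺` at `y = c`, so pointwise
`(c - X)⁺ + 1{X < c} (Y - c) ≤ (Y - X)⁺`. When `X` and `Y` are independent, the correction
term has expectation `P(X < c) (E[Y] - c)`, which is nonnegative as soon as `c ≤ E[Y]`. Applied to
`Y = R0^w Z1^w` and `c = R0^0` this gives `C0^0 ≤ C0^w`; the premium inequality then follows
from `R0^w ≤ R0^0`.
-/

lemma max_sub_zero_add_indicator_mul_le (x y c : ℝ) :
    max (c - x) 0 + (Iio c).indicator 1 x * (y - c) ≤ max (y - x) 0 := by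
  by_cases hx : x < c
  · simp only [indicator_of_mem (mem_Iio.2 hx), Pi.one_apply, one_mul]
    rw [max_eq_left (by linarith)]
    linarith [le_max_left (y - x) 0]
  · simp only [indicator_of_notMem (fun h => hx (mem_Iio.1 h)), zero_mul, add_zero]
    rw [max_eq_right (by linarith)]
    exact le_max_right _ _

theorem integral_max_sub_zero_le_of_indepFun {Ω : Type*} [MeasurableSpace Ω] {P : Measure Ω}
    [IsProbabilityMeasure P] {X Y : Ω → ℝ} (hX : Integrable X P) (hY : Integrable Y P)
    (hXY : IndepFun X Y P) {c : ℝ} (hc : c ≤ ∫ ω, Y ω ∂P) :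
    ∫ ω, max (c - X ω) 0 ∂P ≤ ∫ ω, max (Y ω - X ω) 0 ∂P := by
  set g : ℝ → ℝ := (Iio c).indicator 1
  have hg : Measurable g := measurable_one.indicator measurableSet_Iio
  have hg_bound : ∀ x, ‖g x‖ ≤ 1 := fun x => by
    simpa using norm_indicator_le_norm_self (1 : ℝ → ℝ) x
  have hYc : Integrable (fun ω => Y ω - c) P := hY.sub (integrable_const c)
  have hgX : AEStronglyMeasurable (fun ω => g (X ω)) P :=
    (hg.comp_aemeasurable hX.aemeasurable).aestronglyMeasurable
  have hcorr_int : Integrable (fun ω => g (X ω) * (Y ω - c)) P :=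
    hYc.bdd_mul hgX (.of_forall fun ω => hg_bound (X ω))
  have hcorr_nonneg : 0 ≤ ∫ ω, g (X ω) * (Y ω - c) ∂P := by
    rw [hXY.integral_fun_comp_mul_comp hX.aemeasurable hY.aemeasurable
      hg.aestronglyMeasurable (measurable_sub_const c).aestronglyMeasurable,
      integral_sub hY (integrable_const c), integral_const, probReal_univ, one_smul]
    exact mul_nonneg (integral_nonneg fun ω => indicator_nonneg (fun _ _ => zero_le_one) _)
      (sub_nonneg.2 hc)
  have hlhs_int : Integrable (fun ω => max (c - X ω) 0) P :=
    ((integrable_const c).sub hX).pos_part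
  calc ∫ ω, max (c - X ω) 0 ∂P
      ≤ ∫ ω, max (c - X ω) 0 ∂P + ∫ ω, g (X ω) * (Y ω - c) ∂P :=
        le_add_of_nonneg_right hcorr_nonneg
    _ = ∫ ω, (max (c - X ω) 0 + g (X ω) * (Y ω - c)) ∂P :=
        (integral_add hlhs_int hcorr_int).symm
    _ ≤ ∫ ω, max (Y ω - X ω) 0 ∂P :=
      integral_mono (hlhs_int.add hcorr_int) (hY.sub hX).pos_part
        fun ω => max_sub_zero_add_indicator_mul_le (X ω) (Y ω) c

theorem C0_V0_comparison_general
    {Ω : Type*} [MeasurableSpace Ω] (P : Measure Ω) [IsProbabilityMeasure P]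
    (η : ℝ) (hη : 0 < η)
    (X1 S1 : Ω → ℝ) (hX : Integrable X1 P) (hS : Integrable S1 P)
    (hindep : IndepFun X1 S1 P)
    (w : ℝ)
    (Rw R0 : ℝ)
    (hμ : R0 ≤ Rw * (w * (∫ ω, S1 ω ∂P) + 1 - w)) :
    (∫ ω, max (R0 - X1 ω) 0 ∂P) / (1 + η)
        ≤ (∫ ω, max (Rw * (w * S1 ω + 1 - w) - X1 ω) 0 ∂P) / (1 + η)
    ∧ (Rw ≤ R0 →
        Rw - (∫ ω, max (Rw * (w * S1 ω + 1 - w) - X1 ω) 0 ∂P) / (1 + η)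
          ≤ R0 - (∫ ω, max (R0 - X1 ω) 0 ∂P) / (1 + η)) := by
  have hZ :
      (fun ω => Rw * (w * S1 ω + 1 - w)) = fun ω => Rw * w * S1 ω + Rw * (1 - w) := by
    funext ω; ring
  have hZ_int : Integrable (fun ω => Rw * (w * S1 ω + 1 - w)) P := by
    rw [hZ]; exact (hS.const_mul _).add (integrable_const _)
  have hZ_mean :
      ∫ ω, Rw * (w * S1 ω + 1 - w) ∂P = Rw * (w * (∫ ω, S1 ω ∂P) + 1 - w) := by
    rw [hZ, integral_add (hS.const_mul _) (integrable_const _), integral_const_mul,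
      integral_const, probReal_univ, one_smul]
    ring
  have hZ_indep : IndepFun X1 (fun ω => Rw * (w * S1 ω + 1 - w)) P :=
    hindep.comp measurable_id (by fun_prop : Measurable fun s : ℝ => Rw * (w * s + 1 - w))
  have hC : (∫ ω, max (R0 - X1 ω) 0 ∂P) / (1 + η)
      ≤ (∫ ω, max (Rw * (w * S1 ω + 1 - w) - X1 ω) 0 ∂P) / (1 + η) :=
    div_le_div_of_nonneg_right
      (integral_max_sub_zero_le_of_indepFun hX hZ_int hZ_indep (hZ_mean ▸ hμ)) (by linarith)
  exact ⟨hC, fun hR => by linarith⟩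

/-- comparison of shareholder value and premium between risky
and risk-less investment (Proposition `icxV02` of the paper). -/
theorem C0_V0_comparison
    {Ω : Type*} [MeasurableSpace Ω] (P : Measure Ω) [IsProbabilityMeasure P]
    (η : ℝ) (hη : 0 < η)
    (X1 S1 : Ω → ℝ) (hX : Integrable X1 P) (hS : Integrable S1 P)
    (hindep : IndepFun X1 S1 P) (hS1nn : ∀ ω, 0 ≤ S1 ω)
    (w : ℝ) (hw : w ∈ Icc (0:ℝ) 1)
    (Rw R0 : ℝ) (hRw : 0 ≤ Rw) (hR0 : 0 ≤ R0)
    (hμ : R0 ≤ Rw * (w * (∫ ω, S1 ω ∂P) + 1 - w)) :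
    (∫ ω, max (R0 - X1 ω) 0 ∂P) / (1 + η)
        ≤ (∫ ω, max (Rw * (w * S1 ω + 1 - w) - X1 ω) 0 ∂P) / (1 + η)
    ∧ (Rw ≤ R0 →
        Rw - (∫ ω, max (Rw * (w * S1 ω + 1 - w) - X1 ω) 0 ∂P) / (1 + η)
          ≤ R0 - (∫ ω, max (R0 - X1 ω) 0 ∂P) / (1 + η)) :=
  C0_V0_comparison_general P η hη X1 S1 hX hS hindep w Rw R0 hμ
end

section
/- Let α ∈ (0,1/2), q = Φ^{-1}(1−α) > 0, and let ν > 0, σ > 0, γ > ν·q and μ > max(1, σ·q). For w ∈ [0,1] set μ_w = wμ + 1 − w and σ_w = wσ, and let R0^w be the unique positive solution of γ − r·μ_w + q·√(r²σ_w² + ν²) = 0. Then: (a) the map w ↦ R0^w is strictly convex on [0,1]; (b) R0^w < R0^0 = γ + ν·q for all w ∈ (0, ŵ), where ŵ = 1 if μ ≥ 1 + σ·q, and otherwise ŵ = 2(μ−1)νq / ((1 + σq − μ)(μ − 1 + σq)(γ + νq)). -/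
open MeasureTheory ProbabilityTheory Real Set

/-! With `s = 1 / r`, `B = 1 + (μ - 1) w` and `c = σ w`, the defining equation reads
`γ s + q √(c² + ν² s²) = B`; isolating the square root and squaring gives a quadratic in `s` with
the root `s(w) = (γ B - q √(ν² B² + (γ² - q²ν²) c²)) / (γ² - q²ν²)`. The square root is the
Euclidean norm of the affine map `w ↦ (ν B, √(γ² - q²ν²) σ w)`, whose values are pairwise
non-parallel, so it is strictly convex; hence `s` is strictly concave and positive, and `R = 1 / s`
is strictly convex. For (b), `R w < R 0 = γ + νq` means `s(w) > 1 / (γ + νq)`, which after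
squaring becomes `w ((γ + νq)((μ - 1)² - σ²q²) w + 2 (μ - 1) ν q) > 0`, i.e. `w < ŵ`. -/

theorem sqrt_add_sq_add_sq_lt {x₁ y₁ x₂ y₂ : ℝ} (h : x₁ * y₂ ≠ x₂ * y₁) :
    √((x₁ + x₂) ^ 2 + (y₁ + y₂) ^ 2) < √(x₁ ^ 2 + y₁ ^ 2) + √(x₂ ^ 2 + y₂ ^ 2) := by
  have hn₁ := Real.sq_sqrt (add_nonneg (sq_nonneg x₁) (sq_nonneg y₁))
  have hn₂ := Real.sq_sqrt (add_nonneg (sq_nonneg x₂) (sq_nonneg y₂))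
  have hcs : x₁ * x₂ + y₁ * y₂ < √(x₁ ^ 2 + y₁ ^ 2) * √(x₂ ^ 2 + y₂ ^ 2) :=
    calc x₁ * x₂ + y₁ * y₂ ≤ |x₁ * x₂ + y₁ * y₂| := le_abs_self _
      _ = √((x₁ * x₂ + y₁ * y₂) ^ 2) := (Real.sqrt_sq_eq_abs _).symm
      _ < √((x₁ ^ 2 + y₁ ^ 2) * (x₂ ^ 2 + y₂ ^ 2)) := by
        -- Lagrange's identity
        refine Real.sqrt_lt_sqrt (sq_nonneg _) ?_
        nlinarith [sq_pos_of_ne_zero (sub_ne_zero.2 h)]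
      _ = √(x₁ ^ 2 + y₁ ^ 2) * √(x₂ ^ 2 + y₂ ^ 2) := Real.sqrt_mul (by positivity) _
  calc √((x₁ + x₂) ^ 2 + (y₁ + y₂) ^ 2)
      < √((√(x₁ ^ 2 + y₁ ^ 2) + √(x₂ ^ 2 + y₂ ^ 2)) ^ 2) :=
        Real.sqrt_lt_sqrt (by positivity) (by nlinarith)
    _ = √(x₁ ^ 2 + y₁ ^ 2) + √(x₂ ^ 2 + y₂ ^ 2) := Real.sqrt_sq (by positivity)

theorem sqrt_mul_sq_add_mul_sq {r : ℝ} (hr : 0 ≤ r) (u v : ℝ) :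
    √((r * u) ^ 2 + (r * v) ^ 2) = r * √(u ^ 2 + v ^ 2) := by
  rw [show (r * u) ^ 2 + (r * v) ^ 2 = r ^ 2 * (u ^ 2 + v ^ 2) by ring,
    Real.sqrt_mul (sq_nonneg r), Real.sqrt_sq hr]

theorem strictConvexOn_sqrt_sq_add_sq {a b c d : ℝ} (h : a * d ≠ b * c) :
    StrictConvexOn ℝ univ (fun t => √((a + b * t) ^ 2 + (c + d * t) ^ 2)) := by
  refine ⟨convex_univ, fun x _ y _ hxy s t hs ht hst => ?_⟩
  have hne : s * (a + b * x) * (t * (c + d * y)) ≠ t * (a + b * y) * (s * (c + d * x)) := by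
    have := mul_ne_zero (mul_ne_zero (mul_ne_zero hs.ne' ht.ne') (sub_ne_zero.2 h))
      (sub_ne_zero.2 hxy.symm)
    intro heq
    exact this (by linear_combination heq)
  calc √((a + b * (s • x + t • y)) ^ 2 + (c + d * (s • x + t • y)) ^ 2)
      = √((s * (a + b * x) + t * (a + b * y)) ^ 2 + (s * (c + d * x) + t * (c + d * y)) ^ 2) := by
        congr 3 <;> simp only [smul_eq_mul]
        · linear_combination (-a) * hst
        · linear_combination (-c) * hst
    _ < √((s * (a + b * x)) ^ 2 + (s * (c + d * x)) ^ 2)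
          + √((t * (a + b * y)) ^ 2 + (t * (c + d * y)) ^ 2) := sqrt_add_sq_add_sq_lt hne
    _ = s • √((a + b * x) ^ 2 + (c + d * x) ^ 2) + t • √((a + b * y) ^ 2 + (c + d * y) ^ 2) := by
        rw [sqrt_mul_sq_add_mul_sq hs.le, sqrt_mul_sq_add_mul_sq ht.le, smul_eq_mul,
          smul_eq_mul]

theorem StrictConcaveOn.inv {𝕜 E : Type*} [Field 𝕜] [LinearOrder 𝕜] [IsStrictOrderedRing 𝕜]
    [AddCommMonoid E] [Module 𝕜 E] {s : Set E} {f : E → 𝕜} (hf : StrictConcaveOn 𝕜 s f)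
    (hpos : ∀ x ∈ s, 0 < f x) : StrictConvexOn 𝕜 s (fun x => (f x)⁻¹) := by
  refine ⟨hf.1, fun x hx y hy hxy a b ha hb hab => ?_⟩
  have hmid := hf.2 hx hy hxy ha hb hab
  have hinv := (convexOn_zpow (𝕜 := 𝕜) (-1)).2 (hpos x hx) (hpos y hy) ha.le hb.le hab
  simp only [zpow_neg_one, smul_eq_mul] at hmid hinv ⊢
  calc (f (a • x + b • y))⁻¹ < (a * f x + b * f y)⁻¹ :=
        inv_strictAnti₀ (add_pos (mul_pos ha (hpos x hx)) (mul_pos hb (hpos y hy))) hmid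
    _ ≤ a * (f x)⁻¹ + b * (f y)⁻¹ := hinv

noncomputable def recipRoot (q γ ν B c : ℝ) : ℝ :=
  (γ * B - q * √(ν ^ 2 * B ^ 2 + (γ ^ 2 - q ^ 2 * ν ^ 2) * c ^ 2)) / (γ ^ 2 - q ^ 2 * ν ^ 2)

section recipRoot

variable {q γ ν B c : ℝ}

theorem recipRoot_pos (hq : 0 ≤ q) (hν : 0 ≤ ν) (hγ : ν * q < γ) (hc : 0 ≤ c) (hB : q * c < B) :
    0 < recipRoot q γ ν B c := by
  have hγ0 : 0 < γ := (mul_nonneg hν hq).trans_lt hγ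
  have hB0 : 0 ≤ B := (mul_nonneg hq hc).trans hB.le
  have hC : 0 < γ ^ 2 - q ^ 2 * ν ^ 2 := by nlinarith [mul_nonneg hν hq]
  have hQ := Real.sq_sqrt (by positivity : 0 ≤ ν ^ 2 * B ^ 2 + (γ ^ 2 - q ^ 2 * ν ^ 2) * c ^ 2)
  refine div_pos (sub_pos.2 (lt_of_pow_lt_pow_left₀ 2 (mul_nonneg hγ0.le hB0) ?_)) hC
  rw [mul_pow, hQ]
  nlinarith [mul_pos hC (by nlinarith [mul_nonneg hq hc] : 0 < B ^ 2 - (q * c) ^ 2)]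

theorem recipRoot_solves (hq : 0 ≤ q) (hν : 0 ≤ ν) (hγ : ν * q < γ) (hc : 0 ≤ c)
    (hB : q * c < B) :
    γ - (recipRoot q γ ν B c)⁻¹ * B + q * √((recipRoot q γ ν B c)⁻¹ ^ 2 * c ^ 2 + ν ^ 2) = 0 := by
  have hs := recipRoot_pos hq hν hγ hc hB
  set s := recipRoot q γ ν B c with hs_def
  set C := γ ^ 2 - q ^ 2 * ν ^ 2 with hC_def
  set Q := ν ^ 2 * B ^ 2 + C * c ^ 2 with hQ_def
  have hγ0 : 0 < γ := (mul_nonneg hν hq).trans_lt hγ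
  have hC : 0 < C := by nlinarith [mul_nonneg hν hq]
  have hB0 : 0 ≤ B := (mul_nonneg hq hc).trans hB.le
  have hQ : √Q ^ 2 = Q := Real.sq_sqrt (by positivity)
  have hCs : s = (γ * B - q * √Q) / C := by rw [hs_def, recipRoot, ← hC_def, ← hQ_def]
  have hνB : ν * B ≤ √Q := Real.le_sqrt_of_sq_le (by nlinarith [mul_nonneg hC.le (sq_nonneg c)])
  have hroot : C * √(c ^ 2 + ν ^ 2 * s ^ 2) = γ * √Q - q * ν ^ 2 * B := by
    have hY : 0 ≤ γ * √Q - q * ν ^ 2 * B := by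
      nlinarith [mul_le_mul_of_nonneg_left hνB hγ0.le,
        mul_nonneg (mul_nonneg hν hB0) (sub_nonneg.2 hγ.le)]
    rw [mul_comm, ← eq_div_iff hC.ne', Real.sqrt_eq_iff_eq_sq (by positivity) (div_nonneg hY hC.le),
      hCs]
    field_simp
    linear_combination (-C) * hQ
  have hkey : q * √(c ^ 2 + ν ^ 2 * s ^ 2) = B - γ * s := by
    have hCs' : C * s = γ * B - q * √Q := by rw [hCs, mul_div_cancel₀ _ hC.ne']
    refine mul_left_cancel₀ hC.ne' ?_
    linear_combination q * hroot + γ * hCs' - B * hC_def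
  have hsqrt : √(s⁻¹ ^ 2 * c ^ 2 + ν ^ 2) = s⁻¹ * √(c ^ 2 + ν ^ 2 * s ^ 2) := by
    rw [show s⁻¹ ^ 2 * c ^ 2 + ν ^ 2 = s⁻¹ ^ 2 * (c ^ 2 + ν ^ 2 * s ^ 2) by field_simp,
      Real.sqrt_mul (sq_nonneg _), Real.sqrt_sq (inv_nonneg.2 hs.le)]
  rw [hsqrt, ← mul_assoc, mul_comm q, mul_assoc, hkey]
  field_simp
  ring

theorem inv_add_lt_recipRoot (hq : 0 ≤ q) (hν : 0 ≤ ν) (hγ : ν * q < γ) (hB : 1 ≤ B)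
    (h : 0 < (γ + ν * q) * ((B - 1) ^ 2 - (q * c) ^ 2) + 2 * ν * q * (B - 1)) :
    (γ + ν * q)⁻¹ < recipRoot q γ ν B c := by
  have hγ0 : 0 < γ := (mul_nonneg hν hq).trans_lt hγ
  have hC : 0 < γ ^ 2 - q ^ 2 * ν ^ 2 := by nlinarith [mul_nonneg hν hq]
  have hQ := Real.sq_sqrt (by positivity : 0 ≤ ν ^ 2 * B ^ 2 + (γ ^ 2 - q ^ 2 * ν ^ 2) * c ^ 2)
  have hγq : (γ + ν * q)⁻¹ = (γ - ν * q) / (γ ^ 2 - q ^ 2 * ν ^ 2) := by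
    rw [inv_eq_one_div, div_eq_div_iff (by positivity) hC.ne']
    ring
  have hlt : q * √(ν ^ 2 * B ^ 2 + (γ ^ 2 - q ^ 2 * ν ^ 2) * c ^ 2) < γ * (B - 1) + ν * q := by
    refine lt_of_pow_lt_pow_left₀ 2 (by nlinarith [mul_nonneg hν hq]) ?_
    rw [mul_pow, hQ]
    nlinarith [mul_pos (sub_pos.2 hγ) h]
  rw [hγq, recipRoot, div_lt_div_iff_of_pos_right hC]
  linarith

theorem strictConcaveOn_recipRoot {b₀ b₁ c₀ c₁ : ℝ} (hq : 0 < q) (hν : 0 < ν)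
    (hγ : ν * q < γ) (h : b₀ * c₁ ≠ b₁ * c₀) :
    StrictConcaveOn ℝ univ (fun w => recipRoot q γ ν (b₀ + b₁ * w) (c₀ + c₁ * w)) := by
  have hC : 0 < γ ^ 2 - q ^ 2 * ν ^ 2 := by nlinarith [mul_pos hν hq]
  set t := √(γ ^ 2 - q ^ 2 * ν ^ 2)
  have ht : 0 < t := Real.sqrt_pos.2 hC
  have hnorm : ∀ w, ν ^ 2 * (b₀ + b₁ * w) ^ 2 + (γ ^ 2 - q ^ 2 * ν ^ 2) * (c₀ + c₁ * w) ^ 2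
      = (ν * b₀ + ν * b₁ * w) ^ 2 + (t * c₀ + t * c₁ * w) ^ 2 := fun w => by
    rw [← Real.sq_sqrt hC.le]
    ring
  have hg := strictConvexOn_sqrt_sq_add_sq (a := ν * b₀) (b := ν * b₁) (c := t * c₀) (d := t * c₁)
    (fun heq => mul_ne_zero (mul_ne_zero hν.ne' ht.ne') (sub_ne_zero.2 h)
      (by linear_combination heq))
  refine ⟨convex_univ, fun x _ y _ hxy a b ha hb hab => ?_⟩
  have hgxy := hg.2 trivial trivial hxy ha hb hab
  obtain rfl : b = 1 - a := by linarith
  simp only [recipRoot, hnorm, smul_eq_mul] at hgxy ⊢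
  rw [← mul_div_assoc, ← mul_div_assoc, ← add_div, div_lt_div_iff_of_pos_right hC]
  nlinarith [mul_pos hq (sub_pos.2 hgxy)]

end recipRoot

theorem pos_of_lt_threshold {q γ ν σ μ w : ℝ} (hνq : 0 < ν * q) (hγ : 0 < γ + ν * q)
    (hσq : 0 ≤ σ * q) (hμ : 1 < μ) (hw : 0 < w)
    (hŵ : w < if 1 + σ * q ≤ μ then 1
      else 2 * (μ - 1) * ν * q / ((1 + σ * q - μ) * (μ - 1 + σ * q) * (γ + ν * q))) :
    0 < (γ + ν * q) * ((μ - 1) ^ 2 - (σ * q) ^ 2) * w + 2 * (μ - 1) * ν * q := by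
  split_ifs at hŵ with hμσ
  · have hsq : 0 ≤ (μ - 1) ^ 2 - (σ * q) ^ 2 := by nlinarith
    have : 0 ≤ (γ + ν * q) * ((μ - 1) ^ 2 - (σ * q) ^ 2) * w := by positivity
    nlinarith
  · rw [lt_div_iff₀ (mul_pos (mul_pos (by linarith) (by linarith)) hγ)] at hŵ
    nlinarith

theorem R0_strict_convex_and_below_riskless_general
    (q γ ν σ μ : ℝ) (hq0 : 0 < q)
    (hν : 0 < ν) (hσ : 0 < σ) (hγ : ν * q < γ) (hμ : max 1 (σ * q) < μ)
    (R : ℝ → ℝ)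
    (hRuniq : ∀ w ∈ Icc (0:ℝ) 1, ∀ r : ℝ, 0 < r →
        γ - r * (w * μ + 1 - w) + q * Real.sqrt (r^2 * (w * σ)^2 + ν^2) = 0 → r = R w) :
    StrictConvexOn ℝ (Icc (0:ℝ) 1) R
    ∧ R 0 = γ + ν * q
    ∧ (∀ w : ℝ, 0 < w → w ≤ 1 →
        w < (if 1 + σ * q ≤ μ then 1
             else 2 * (μ - 1) * ν * q
                / ((1 + σ * q - μ) * (μ - 1 + σ * q) * (γ + ν * q))) →
        R w < γ + ν * q) := by
  obtain ⟨hμ1, hσqμ⟩ := max_lt_iff.1 hμ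
  have hγq : 0 < γ + ν * q := by linarith [mul_pos hν hq0]
  have hc : ∀ w ∈ Icc (0:ℝ) 1, 0 ≤ w * σ := fun w hw => mul_nonneg hw.1 hσ.le
  have hB : ∀ w ∈ Icc (0:ℝ) 1, q * (w * σ) < w * μ + 1 - w := fun w hw => by
    rcases hw.2.lt_or_eq with hw1 | rfl
    · nlinarith [mul_le_mul_of_nonneg_left hσqμ.le hw.1]
    · linarith
  have hpos : ∀ w ∈ Icc (0:ℝ) 1, 0 < recipRoot q γ ν (w * μ + 1 - w) (w * σ) := fun w hw =>
    recipRoot_pos hq0.le hν.le hγ (hc w hw) (hB w hw)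
  have hR : ∀ w ∈ Icc (0:ℝ) 1, R w = (recipRoot q γ ν (w * μ + 1 - w) (w * σ))⁻¹ := fun w hw =>
    (hRuniq w hw _ (inv_pos.2 (hpos w hw))
      (recipRoot_solves hq0.le hν.le hγ (hc w hw) (hB w hw))).symm
  refine ⟨?_, ?_, fun w hw0 hw1 hŵ => ?_⟩
  · have hconc : StrictConcaveOn ℝ (Icc 0 1) fun w => recipRoot q γ ν (w * μ + 1 - w) (w * σ) := by
      refine ((strictConcaveOn_recipRoot (b₀ := 1) (b₁ := μ - 1) (c₀ := 0) (c₁ := σ) hq0 hν hγ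
        (by simpa using hσ.ne')).subset (subset_univ _) (convex_Icc 0 1)).congr fun w _ => ?_
      dsimp only
      congr 1 <;> ring
    exact (hconc.inv hpos).congr fun w hw => (hR w hw).symm
  · refine (hRuniq 0 ⟨le_rfl, zero_le_one⟩ _ hγq ?_).symm
    rw [show (γ + ν * q) ^ 2 * (0 * σ) ^ 2 + ν ^ 2 = ν ^ 2 by ring, Real.sqrt_sq hν.le]
    ring
  · rw [hR w ⟨hw0.le, hw1⟩]
    refine inv_lt_of_inv_lt₀ hγq (inv_add_lt_recipRoot hq0.le hν.le hγ (by nlinarith) ?_)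
    have := pos_of_lt_threshold (mul_pos hν hq0) hγq (mul_pos hσ hq0).le hμ1 hw0 hŵ
    exact (mul_pos hw0 this).trans_eq (by ring)

/-- `w ↦ R0^w` is strictly convex on `[0,1]` and stays below
`R0^0 = γ + ν·q` on `(0, ŵ)`. -/
theorem R0_strict_convex_and_below_riskless
    (α q γ ν σ μ : ℝ) (hα : α ∈ Ioo (0:ℝ) (1/2))
    (hq : stdNormalCDF q = 1 - α) (hq0 : 0 < q)
    (hν : 0 < ν) (hσ : 0 < σ) (hγ : ν * q < γ) (hμ : max 1 (σ * q) < μ)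
    (R : ℝ → ℝ)
    (hR : ∀ w ∈ Icc (0:ℝ) 1, 0 < R w ∧
        γ - R w * (w * μ + 1 - w) + q * Real.sqrt ((R w)^2 * (w * σ)^2 + ν^2) = 0)
    (hRuniq : ∀ w ∈ Icc (0:ℝ) 1, ∀ r : ℝ, 0 < r →
        γ - r * (w * μ + 1 - w) + q * Real.sqrt (r^2 * (w * σ)^2 + ν^2) = 0 → r = R w) :
    StrictConvexOn ℝ (Icc (0:ℝ) 1) R
    ∧ R 0 = γ + ν * q
    ∧ (∀ w : ℝ, 0 < w → w ≤ 1 →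
        w < (if 1 + σ * q ≤ μ then 1
             else 2 * (μ - 1) * ν * q
                / ((1 + σ * q - μ) * (μ - 1 + σ * q) * (γ + ν * q))) →
        R w < γ + ν * q) :=
  R0_strict_convex_and_below_riskless_general q γ ν σ μ hq0 hν hσ hγ hμ R hRuniq
end

section
/- Let α ∈ (0,1/2), q = Φ^{-1}(1−α) > 0, η > 0, and let X1 ~ N(γ, ν²) and Z1 ~ N(μ, σ²) be independent with μ, γ, σ, ν > 0. Suppose R0 > 0 satisfies VaR_α(R0·Z1 − X1) = 0, i.e. γ − R0μ + q√(R0²σ² + ν²) = 0. Then, with δ(α) = φ(q)/q − α, C0 := E[(R0·Z1 − X1)^+]/(1+η) = (R0μ − γ)(1 + δ(α))/(1+η), and V0 := R0 − C0 = γ(1+δ(α))/(1+η) + R0·(1 + η − μ(1+δ(α)))/(1+η). -/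
open MeasureTheory ProbabilityTheory Real Set

/-! The profit `R0 Z1 - X1` is Gaussian with mean `m = R0 μ - γ` and standard deviation
`s = √(R0² σ² + ν²)`, and the VaR condition says exactly `m = q s`. Bachelier's formula
`E[Y⁺] = m Φ(m/s) + s φ(m/s)` for `Y ~ N(m, s²)` then gives `E[(R0 Z1 - X1)⁺] = m (1 - α) + (m/q) φ(q)`. -/

open scoped NNReal Topology
open Filter

lemma hasDerivAt_gaussianPDFReal (m : ℝ) (v : ℝ≥0) (x : ℝ) :
    HasDerivAt (gaussianPDFReal m v) (-((x - m) / v) * gaussianPDFReal m v x) x := by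
  have h : HasDerivAt (fun y ↦ -(y - m) ^ 2 / (2 * v)) (-((x - m) / v)) x := by
    refine ((hasDerivAt_id x |>.sub_const m |>.pow 2).neg.div_const (2 * (v : ℝ))).congr_deriv ?_
    simp only [id, Nat.cast_ofNat]
    ring
  refine (h.exp.const_mul (√(2 * π * v))⁻¹).congr_deriv ?_
  simp only [gaussianPDFReal]
  ring

lemma tendsto_gaussianPDFReal_atTop (m : ℝ) {v : ℝ≥0} (hv : v ≠ 0) :
    Tendsto (gaussianPDFReal m v) atTop (𝓝 0) := by
  have h : Tendsto (fun x : ℝ ↦ -(x - m) ^ 2 / (2 * v)) atTop atBot :=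
    (tendsto_neg_atTop_atBot.comp ((tendsto_pow_atTop two_ne_zero).comp
      (tendsto_atTop_add_const_right _ _ tendsto_id))).atBot_div_const (by positivity)
  simpa [gaussianPDFReal_def] using (tendsto_exp_atBot.comp h).const_mul (√(2 * π * v))⁻¹

lemma integrable_sub_mul_gaussianPDFReal (m : ℝ) {v : ℝ≥0} (hv : v ≠ 0) :
    Integrable fun x ↦ (x - m) * gaussianPDFReal m v x := by
  have h := ((integrable_mul_exp_neg_mul_sq (b := (2 * (v : ℝ))⁻¹) (by positivity)).comp_sub_right
    m).const_mul (√(2 * π * v))⁻¹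
  refine h.congr (ae_of_all _ fun x ↦ ?_)
  simp only [gaussianPDFReal]
  ring_nf

lemma integral_Ioi_sub_mul_gaussianPDFReal (m a : ℝ) {v : ℝ≥0} (hv : v ≠ 0) :
    ∫ x in Ioi a, (x - m) * gaussianPDFReal m v x = v * gaussianPDFReal m v a := by
  have hderiv : ∀ x ∈ Ici a, HasDerivAt (fun x ↦ -(v : ℝ) * gaussianPDFReal m v x)
      ((x - m) * gaussianPDFReal m v x) x := fun x _ ↦ by
    refine ((hasDerivAt_gaussianPDFReal m v x).const_mul (-(v : ℝ))).congr_deriv ?_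
    have : (v : ℝ) ≠ 0 := by positivity
    field_simp
  rw [integral_Ioi_of_hasDerivAt_of_tendsto' hderiv
    (integrable_sub_mul_gaussianPDFReal m hv).integrableOn
    (by simpa using (tendsto_gaussianPDFReal_atTop m hv).const_mul (-(v : ℝ)))]
  ring

lemma gaussianReal_real_Ioi_zero (m : ℝ) {v : ℝ≥0} (hv : v ≠ 0) :
    (gaussianReal m v).real (Ioi 0) = stdNormalCDF (m / √v) := by
  have hs : 0 < √(v : ℝ) := by positivity
  have hstd : (gaussianReal m v).map ((· / √v) ∘ (m - ·)) = gaussianReal 0 1 := by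
    rw [← Measure.map_map (by fun_prop) (by fun_prop), gaussianReal_map_const_sub,
      gaussianReal_map_div_const, sub_self, zero_div]
    congr
    ext; simp [hv]
  have hpre : (· / √v) ∘ (m - ·) ⁻¹' Iio (m / √v) = Ioi 0 := by
    ext x; simp [div_lt_div_iff_of_pos_right hs]
  have := nullSingletonClass_gaussianReal (μ := 0) one_ne_zero
  rw [stdNormalCDF, ← measure_congr Iio_ae_eq_Iic, ← hstd,
    Measure.map_apply (by fun_prop) measurableSet_Iio, hpre, measureReal_def]

lemma mul_gaussianPDFReal_zero (m : ℝ) {v : ℝ≥0} (hv : v ≠ 0) :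
    v * gaussianPDFReal m v 0 = √v * stdNormalPDF (m / √v) := by
  have hs : √(v : ℝ) ≠ 0 := by positivity
  rw [gaussianPDFReal, stdNormalPDF, div_pow, Real.sq_sqrt v.coe_nonneg,
    Real.sqrt_mul (by positivity), show -(0 - m) ^ 2 / (2 * (v : ℝ)) = -(m ^ 2 / v) / 2 by ring]
  nth_rw 1 [← Real.mul_self_sqrt v.coe_nonneg]
  field_simp

lemma integral_max_zero_gaussianReal (m : ℝ) {v : ℝ≥0} (hv : v ≠ 0) :
    ∫ x, max x 0 ∂gaussianReal m v = m * stdNormalCDF (m / √v) + √v * stdNormalPDF (m / √v) := by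
  have hmax : ∀ x, gaussianPDFReal m v x • max x 0
      = (Ioi 0).indicator (fun x ↦ (x - m) * gaussianPDFReal m v x + m * gaussianPDFReal m v x) x := by
    intro x
    rcases lt_or_ge 0 x with hx | hx
    · rw [indicator_of_mem (mem_Ioi.mpr hx), max_eq_left hx.le, smul_eq_mul]
      ring
    · rw [indicator_of_notMem (notMem_Ioi.mpr hx), max_eq_right hx, smul_zero]
  have hmass : ∫ x in Ioi 0, gaussianPDFReal m v x = (gaussianReal m v).real (Ioi 0) := by
    rw [measureReal_def, gaussianReal_apply_eq_integral m hv,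
      ENNReal.toReal_ofReal (integral_nonneg (gaussianPDFReal_nonneg m v))]
  rw [integral_gaussianReal_eq_integral_smul hv, integral_congr_ae (ae_of_all _ hmax),
    integral_indicator measurableSet_Ioi,
    integral_add (integrable_sub_mul_gaussianPDFReal m hv).integrableOn
      ((integrable_gaussianPDFReal m v).const_mul m).integrableOn,
    integral_Ioi_sub_mul_gaussianPDFReal m 0 hv, integral_const_mul, hmass,
    gaussianReal_real_Ioi_zero m hv, mul_gaussianPDFReal_zero m hv]
  ring

lemma gaussianReal_const_mul_sub_of_indepFun {Ω : Type*} [MeasurableSpace Ω] {P : Measure Ω}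
    {X Z : Ω → ℝ} {mX mZ : ℝ} {vX vZ : ℝ≥0} (c : ℝ) (hX : HasLaw X (gaussianReal mX vX) P)
    (hZ : HasLaw Z (gaussianReal mZ vZ) P) (hXZ : IndepFun X Z P) :
    HasLaw (fun ω ↦ c * Z ω - X ω)
      (gaussianReal (c * mZ - mX) (.mk (c ^ 2) (sq_nonneg _) * vZ + vX)) P := by
  have h := (hXZ.symm.comp (measurable_const_mul c) measurable_neg).hasLaw_fun_add
    (gaussianReal_const_mul hZ c) (gaussianReal_neg hX)
  rw [gaussianReal_conv_gaussianReal] at h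
  simpa only [sub_eq_add_neg, Pi.neg_apply] using h

theorem C0_V0_gaussian_formulas_general
    {Ω : Type*} [MeasurableSpace Ω] (P : Measure Ω) [IsProbabilityMeasure P]
    (α q η γ ν μ σ : ℝ)
    (hq : stdNormalCDF q = 1 - α) (hq0 : 0 < q) (hη : 0 < η)
    (hν : 0 < ν)
    (X1 Z1 : Ω → ℝ) (hX1m : Measurable X1) (hZ1m : Measurable Z1)
    (hX : P.map X1 = gaussianReal γ (ν ^ 2).toNNReal)
    (hZ : P.map Z1 = gaussianReal μ (σ ^ 2).toNNReal)
    (hindep : IndepFun X1 Z1 P)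
    (R0 : ℝ)
    (heq : γ - R0 * μ + q * Real.sqrt (R0 ^ 2 * σ ^ 2 + ν ^ 2) = 0) :
    (∫ ω, max (R0 * Z1 ω - X1 ω) 0 ∂P) / (1 + η)
        = (R0 * μ - γ) * (1 + (stdNormalPDF q / q - α)) / (1 + η)
    ∧ R0 - (∫ ω, max (R0 * Z1 ω - X1 ω) 0 ∂P) / (1 + η)
        = γ * (1 + (stdNormalPDF q / q - α)) / (1 + η)
          + R0 * (1 + η - μ * (1 + (stdNormalPDF q / q - α))) / (1 + η) := by
  have hlaw := gaussianReal_const_mul_sub_of_indepFun R0 ⟨hX1m.aemeasurable, hX⟩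
    ⟨hZ1m.aemeasurable, hZ⟩ hindep
  set v : ℝ≥0 := .mk (R0 ^ 2) (sq_nonneg _) * (σ ^ 2).toNNReal + (ν ^ 2).toNNReal
  have hv : (v : ℝ) = R0 ^ 2 * σ ^ 2 + ν ^ 2 := by simp [v, sq_nonneg]
  have hv0 : v ≠ 0 := by
    rw [← NNReal.coe_ne_zero, hv]
    positivity
  have hmean : R0 * μ - γ = q * √v := by rw [hv]; linarith
  have hquantile : (R0 * μ - γ) / √v = q := by
    rw [hmean, mul_div_cancel_right₀ _ (by positivity)]
  have hC : ∫ ω, max (R0 * Z1 ω - X1 ω) 0 ∂P = (R0 * μ - γ) * (1 + (stdNormalPDF q / q - α)) := by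
    rw [← Function.comp_def (fun x ↦ max x 0), hlaw.integral_comp (by fun_prop),
      integral_max_zero_gaussianReal _ hv0, hquantile, hq, hmean]
    field_simp
    ring
  refine ⟨by rw [hC], ?_⟩
  rw [hC]
  field_simp
  ring

/-- explicit formulas for `C0` and `V0` in the Gaussian model
with `R0` determined by `VaR_α`. -/
theorem C0_V0_gaussian_formulas
    {Ω : Type*} [MeasurableSpace Ω] (P : Measure Ω) [IsProbabilityMeasure P]
    (α q η γ ν μ σ : ℝ) (hα : α ∈ Ioo (0:ℝ) (1/2))
    (hq : stdNormalCDF q = 1 - α) (hq0 : 0 < q) (hη : 0 < η)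
    (hγ : 0 < γ) (hν : 0 < ν) (hμ : 0 < μ) (hσ : 0 < σ)
    (X1 Z1 : Ω → ℝ) (hX1m : Measurable X1) (hZ1m : Measurable Z1)
    (hX : P.map X1 = gaussianReal γ (ν ^ 2).toNNReal)
    (hZ : P.map Z1 = gaussianReal μ (σ ^ 2).toNNReal)
    (hindep : IndepFun X1 Z1 P)
    (R0 : ℝ) (hR0 : 0 < R0)
    (heq : γ - R0 * μ + q * Real.sqrt (R0 ^ 2 * σ ^ 2 + ν ^ 2) = 0) :
    (∫ ω, max (R0 * Z1 ω - X1 ω) 0 ∂P) / (1 + η)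
        = (R0 * μ - γ) * (1 + (stdNormalPDF q / q - α)) / (1 + η)
    ∧ R0 - (∫ ω, max (R0 * Z1 ω - X1 ω) 0 ∂P) / (1 + η)
        = γ * (1 + (stdNormalPDF q / q - α)) / (1 + η)
          + R0 * (1 + η - μ * (1 + (stdNormalPDF q / q - α))) / (1 + η) :=
  C0_V0_gaussian_formulas_general P α q η γ ν μ σ hq hq0 hη hν X1 Z1 hX1m hZ1m hX hZ hindep R0 heq
end

section
/- Let α ∈ (0,1), set ψ = φ(Φ^{-1}(1−α))/α, and let X1 ~ N(γ, ν²) and Z1 ~ N(μ, σ²) be independent with μ, γ, σ, ν > 0. (i) If μ > σ·ψ, then R0 = (μγ + ψ·√(γ²σ² + μ²ν² − σ²ν²ψ²)) / (μ² − σ²ψ²) is the unique positive solution of ES_α(R0·Z1 − X1) = 0. (ii) If μ ≤ σ·ψ, then ES_α(R0·Z1 − X1) = 0 has no positive solution R0. -/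
open MeasureTheory ProbabilityTheory Real Set

/-! Since `X₁ - r Z₁ ∼ N(γ - rμ, ν² + r²σ²)`, everything reduces to the expected shortfall of a
Gaussian `Y ∼ N(m, s²)`. Its value at risk at level `β = 1 - Φ x` is `-m + s x`, so the
substitution `β = 1 - Φ x` turns `∫₀^α VaR_β dβ` into `∫_q^∞ (-m + s x) φ x dx = -α m + s φ q`
(an antiderivative of `(a + b x) φ x` is `a Φ x - b φ x`). Hence
`ES_α(r Z₁ - X₁) = γ - rμ + ψ √(ν² + r²σ²)`. For `μ ≤ σψ` this is at least `γ > 0` when `r ≥ 0`.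
For `μ > σψ`, its zeros are the solutions of `(rμ - γ)² = ψ² (ν² + r²σ²)` with `rμ ≥ γ`; this
quadratic has the roots `(μγ ± ψ w) / (μ² - σ²ψ²)`, `w = √(γ²σ² + μ²ν² - σ²ν²ψ²)`, and only the
larger one satisfies the sign condition. -/

open Filter
open scoped NNReal Topology

lemma gaussianPDFReal_zero_one : gaussianPDFReal 0 1 = stdNormalPDF := by
  funext x
  simp [gaussianPDFReal, stdNormalPDF]

lemma stdNormalPDF_pos (x : ℝ) : 0 < stdNormalPDF x := by
  rw [← gaussianPDFReal_zero_one]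
  exact gaussianPDFReal_pos _ _ _ one_ne_zero

lemma integrable_stdNormalPDF : Integrable stdNormalPDF := by
  rw [← gaussianPDFReal_zero_one]
  exact integrable_gaussianPDFReal 0 1

lemma integrable_mul_stdNormalPDF : Integrable fun x => x * stdNormalPDF x := by
  simpa [stdNormalPDF, div_eq_inv_mul, mul_left_comm] using
    (integrable_mul_exp_neg_mul_sq (b := 2⁻¹) (by norm_num)).const_mul (√(2 * π))⁻¹

lemma hasDerivAt_stdNormalPDF (x : ℝ) : HasDerivAt stdNormalPDF (-x * stdNormalPDF x) x := by
  have h : HasDerivAt (fun y : ℝ => -y ^ 2 / 2) (-x) x :=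
    ((hasDerivAt_pow 2 x).fun_neg.div_const 2).congr_deriv (by norm_num; ring)
  exact (h.exp.const_mul (√(2 * π))⁻¹).congr_deriv (by rw [stdNormalPDF]; ring)

lemma tendsto_stdNormalPDF_atTop : Tendsto stdNormalPDF atTop (𝓝 0) := by
  have h : Tendsto (fun x : ℝ => -x ^ 2 / 2) atTop atBot :=
    (tendsto_neg_atTop_atBot.comp (tendsto_pow_atTop two_ne_zero)).atBot_div_const two_pos
  unfold stdNormalPDF
  simpa using (tendsto_exp_atBot.comp h).const_mul (√(2 * π))⁻¹

lemma stdNormalCDF_eq_cdf : stdNormalCDF = cdf (gaussianReal 0 1) := by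
  funext x
  rw [cdf_eq_real, measureReal_def, stdNormalCDF]

lemma stdNormalCDF_eq_integral (x : ℝ) : stdNormalCDF x = ∫ t in Iic x, stdNormalPDF t := by
  rw [stdNormalCDF, gaussianReal_apply_eq_integral 0 one_ne_zero, gaussianPDFReal_zero_one,
    ENNReal.toReal_ofReal (setIntegral_nonneg measurableSet_Iic fun t _ => (stdNormalPDF_pos t).le)]

lemma hasDerivAt_stdNormalCDF (x : ℝ) : HasDerivAt stdNormalCDF (stdNormalPDF x) x := by
  have hΦ : stdNormalCDF = fun y => stdNormalCDF 0 + ∫ t in (0:ℝ)..y, stdNormalPDF t := by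
    funext y
    rw [← intervalIntegral.integral_Iic_sub_Iic integrable_stdNormalPDF.integrableOn
      integrable_stdNormalPDF.integrableOn, ← stdNormalCDF_eq_integral,
      ← stdNormalCDF_eq_integral, add_sub_cancel]
  have hcont : Continuous stdNormalPDF := by unfold stdNormalPDF; fun_prop
  rw [hΦ]
  exact (intervalIntegral.integral_hasDerivAt_right integrable_stdNormalPDF.intervalIntegrable
    (hcont.stronglyMeasurableAtFilter _ _) hcont.continuousAt).const_add _

lemma stdNormalCDF_strictMono : StrictMono stdNormalCDF :=
  strictMono_of_hasDerivAt_pos hasDerivAt_stdNormalCDF stdNormalPDF_pos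

lemma continuous_stdNormalCDF : Continuous stdNormalCDF :=
  continuous_iff_continuousAt.2 fun x => (hasDerivAt_stdNormalCDF x).continuousAt

lemma stdNormalCDF_lt_one (x : ℝ) : stdNormalCDF x < 1 :=
  (stdNormalCDF_strictMono (lt_add_one x)).trans_le
    (stdNormalCDF_eq_cdf ▸ cdf_le_one _ _)

lemma stdNormalCDF_image_Ioi (q : ℝ) : stdNormalCDF '' Ioi q = Ioo (stdNormalCDF q) 1 := by
  refine subset_antisymm ?_ ?_
  · rintro _ ⟨x, hx, rfl⟩
    exact ⟨stdNormalCDF_strictMono hx, stdNormalCDF_lt_one x⟩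
  · refine isPreconnected_Ioi.intermediate_value_Ioo (l₁ := 𝓝[>] q) (l₂ := atTop)
      inf_le_right ?_ continuous_stdNormalCDF.continuousOn
      continuous_stdNormalCDF.continuousWithinAt.tendsto ?_
    · exact le_principal_iff.2 (Ioi_mem_atTop q)
    · exact stdNormalCDF_eq_cdf ▸ tendsto_cdf_atTop _

lemma integral_Ioi_stdNormalPDF_mul_affine (a b q : ℝ) :
    ∫ x in Ioi q, stdNormalPDF x * (a + b * x) = a * (1 - stdNormalCDF q) + b * stdNormalPDF q := by
  have hint : Integrable fun x => stdNormalPDF x * (a + b * x) :=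
    ((integrable_stdNormalPDF.const_mul a).add (integrable_mul_stdNormalPDF.const_mul b)).congr
      (ae_of_all _ fun x => by simp only [Pi.add_apply]; ring)
  have hlim :
      Tendsto (fun x => a * stdNormalCDF x - b * stdNormalPDF x) atTop (𝓝 (a * 1 - b * 0)) :=
    ((stdNormalCDF_eq_cdf ▸ tendsto_cdf_atTop _).const_mul a).sub
      (tendsto_stdNormalPDF_atTop.const_mul b)
  rw [integral_Ioi_of_hasDerivAt_of_tendsto' (fun x _ => ?_) hint.integrableOn hlim]
  · ring
  · exact (((hasDerivAt_stdNormalCDF x).const_mul a).sub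
      ((hasDerivAt_stdNormalPDF x).const_mul b)).congr_deriv (by ring)

lemma toReal_gaussianReal_Iic (m : ℝ) {v : ℝ≥0} (hv : v ≠ 0) (y : ℝ) :
    (gaussianReal m v (Iic y)).toReal = stdNormalCDF ((y - m) / √v) := by
  have hs : 0 < √(v : ℝ) := Real.sqrt_pos.2 (by positivity)
  have hlaw : gaussianReal m v = ((gaussianReal 0 1).map (√v * ·)).map (· + m) := by
    rw [gaussianReal_map_const_mul, gaussianReal_map_add_const]
    congr 1
    · simp
    · ext
      simp
  have hpre : (fun x => √v * x + m) ⁻¹' Iic y = Iic ((y - m) / √v) := by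
    ext x
    simp only [mem_preimage, mem_Iic, le_div_iff₀ hs]
    constructor <;> intro <;> linarith
  rw [hlaw, Measure.map_map (by fun_prop) (by fun_prop),
    Measure.map_apply (by fun_prop) measurableSet_Iic]
  exact congrArg (fun s => ((gaussianReal 0 1) s).toReal) hpre

section GaussianRisk

variable {Ω : Type*} [MeasurableSpace Ω] {P : Measure Ω} {X Y Z : Ω → ℝ} {m a b : ℝ} {v w : ℝ≥0}

lemma map_const_mul_sub_eq_gaussianReal (hXZ : IndepFun X Z P) (hX : P.map X = gaussianReal a v)
    (hZ : P.map Z = gaussianReal b w) (r : ℝ) :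
    P.map (fun ω => r * Z ω - X ω)
      = gaussianReal (r * b - a) (v + .mk (r ^ 2) (sq_nonneg r) * w) := by
  have hXlaw : HasLaw X (gaussianReal a v) P :=
    ⟨.of_map_ne_zero (by rw [hX]; exact IsProbabilityMeasure.ne_zero _), hX⟩
  have hZlaw : HasLaw Z (gaussianReal b w) P :=
    ⟨.of_map_ne_zero (by rw [hZ]; exact IsProbabilityMeasure.ne_zero _), hZ⟩
  rw [sub_eq_add_neg, add_comm v]
  exact gaussianReal_add_gaussianReal_of_indepFun
    (hXZ.symm.comp (measurable_const_mul r) measurable_neg)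
    (gaussianReal_const_mul hZlaw r).map_eq (gaussianReal_neg hXlaw).map_eq

lemma VaR_one_sub_stdNormalCDF (hv : v ≠ 0) (hY : P.map Y = gaussianReal m v) (x : ℝ) :
    VaR P (1 - stdNormalCDF x) Y = -m + √v * x := by
  have hs : 0 < √(v : ℝ) := Real.sqrt_pos.2 (by positivity)
  have hYae : AEMeasurable Y P :=
    .of_map_ne_zero (by rw [hY]; exact IsProbabilityMeasure.ne_zero _)
  have hneg : P.map (fun ω => -Y ω) = gaussianReal (-m) v := (gaussianReal_neg ⟨hYae, hY⟩).map_eq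
  have hcdf : ∀ y, (P {ω | -Y ω ≤ y}).toReal = stdNormalCDF ((y + m) / √v) := fun y => by
    rw [← sub_neg_eq_add, ← toReal_gaussianReal_Iic _ hv, ← hneg,
      Measure.map_apply_of_aemeasurable (by fun_prop) measurableSet_Iic]
    rfl
  have hset : {y | stdNormalCDF x ≤ (P {ω | -Y ω ≤ y}).toReal} = Ici (-m + √v * x) := by
    ext y
    rw [mem_ofPred_eq, hcdf, stdNormalCDF_strictMono.le_iff_le, le_div_iff₀ hs, mem_Ici]
    constructor <;> intro <;> linarith
  rw [VaR, sub_sub_cancel, hset, csInf_Ici]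

lemma ES_of_map_eq_gaussianReal (hv : v ≠ 0) (hY : P.map Y = gaussianReal m v) {α q : ℝ}
    (hq : stdNormalCDF q = 1 - α) : ES P α Y = -m + √v * (stdNormalPDF q / α) := by
  have hα : 0 < α := by linarith [stdNormalCDF_lt_one q]
  have himage : (fun x => 1 - stdNormalCDF x) '' Ioi q = Ioo 0 α := by
    rw [← image_image (fun p => 1 - p) stdNormalCDF, stdNormalCDF_image_Ioi, image_const_sub_Ioo,
      sub_self, hq, sub_sub_cancel]
  have hsubst : ∫ β in Ioo 0 α, VaR P β Y = ∫ x in Ioi q, stdNormalPDF x * (-m + √v * x) := by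
    rw [← himage, integral_image_eq_integral_abs_deriv_smul measurableSet_Ioi
      (fun x _ => ((hasDerivAt_stdNormalCDF x).const_sub 1).hasDerivWithinAt)
      (sub_right_injective.comp stdNormalCDF_strictMono.injective).injOn]
    refine setIntegral_congr_fun measurableSet_Ioi fun x _ => ?_
    rw [abs_neg, abs_of_pos (stdNormalPDF_pos x), smul_eq_mul, VaR_one_sub_stdNormalCDF hv hY]
  rw [ES, intervalIntegral.integral_of_le hα.le, integral_Ioc_eq_integral_Ioo, hsubst,
    integral_Ioi_stdNormalPDF_mul_affine, hq]
  field_simp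
  ring

end GaussianRisk

section CapitalEquation

noncomputable def gaussianESCapital (γ ν μ σ ψ : ℝ) : ℝ :=
  (μ * γ + ψ * √(γ ^ 2 * σ ^ 2 + μ ^ 2 * ν ^ 2 - σ ^ 2 * ν ^ 2 * ψ ^ 2)) / (μ ^ 2 - σ ^ 2 * ψ ^ 2)

variable {γ ν μ σ ψ : ℝ}

lemma sub_add_mul_sqrt_eq_zero_iff (hψ : 0 ≤ ψ) (r : ℝ) :
    γ - r * μ + ψ * √(ν ^ 2 + r ^ 2 * σ ^ 2) = 0 ↔
      0 ≤ r * μ - γ ∧ (r * μ - γ) ^ 2 = ψ ^ 2 * (ν ^ 2 + r ^ 2 * σ ^ 2) := by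
  have hA : 0 ≤ ν ^ 2 + r ^ 2 * σ ^ 2 := by positivity
  constructor
  · intro h
    have hu : r * μ - γ = ψ * √(ν ^ 2 + r ^ 2 * σ ^ 2) := by linarith
    rw [hu, mul_pow, sq_sqrt hA]
    exact ⟨by positivity, rfl⟩
  · rintro ⟨hu, hsq⟩
    rw [← sqrt_sq hψ, ← sqrt_mul (sq_nonneg ψ), ← hsq, sqrt_sq hu]
    ring

lemma sub_add_mul_sqrt_pos (hγ : 0 < γ) (hψ : 0 ≤ ψ) (h : μ ≤ σ * ψ) {r : ℝ} (hr : 0 ≤ r) :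
    0 < γ - r * μ + ψ * √(ν ^ 2 + r ^ 2 * σ ^ 2) := by
  have hrσ : r * σ ≤ √(ν ^ 2 + r ^ 2 * σ ^ 2) := le_sqrt_of_sq_le (by nlinarith [sq_nonneg ν])
  nlinarith [mul_le_mul_of_nonneg_left h hr, mul_le_mul_of_nonneg_left hrσ hψ]

lemma gaussianESCapital_pos (hγ : 0 < γ) (hσ : 0 ≤ σ) (hψ : 0 ≤ ψ) (h : σ * ψ < μ) :
    0 < gaussianESCapital γ ν μ σ ψ := by
  have hσψ : 0 ≤ σ * ψ := mul_nonneg hσ hψ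
  have hμ : 0 < μ := hσψ.trans_lt h
  exact div_pos (by positivity) (by nlinarith)

lemma sub_add_mul_sqrt_eq_zero_iff_eq_gaussianESCapital (hγ : 0 < γ) (hσ : 0 < σ) (hψ : 0 < ψ)
    (h : σ * ψ < μ) (r : ℝ) :
    γ - r * μ + ψ * √(ν ^ 2 + r ^ 2 * σ ^ 2) = 0 ↔ r = gaussianESCapital γ ν μ σ ψ := by
  unfold gaussianESCapital
  set d := μ ^ 2 - σ ^ 2 * ψ ^ 2
  set D := γ ^ 2 * σ ^ 2 + μ ^ 2 * ν ^ 2 - σ ^ 2 * ν ^ 2 * ψ ^ 2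
  set w := √D
  have hσψ : 0 < σ * ψ := mul_pos hσ hψ
  have hμ : 0 < μ := hσψ.trans h
  have hd : 0 < d := by nlinarith
  have hD : D = γ ^ 2 * σ ^ 2 + ν ^ 2 * d := by ring
  have hw2 : w ^ 2 = D := sq_sqrt (by rw [hD]; positivity)
  have hμw : γ * σ ^ 2 * ψ < μ * w := by
    refine lt_of_pow_lt_pow_left₀ 2 (by positivity) ?_
    rw [mul_pow μ, hw2, hD]
    nlinarith [mul_lt_mul_of_pos_right (by nlinarith : (σ * ψ) ^ 2 < μ ^ 2)
      (by positivity : 0 < γ ^ 2 * σ ^ 2), mul_nonneg (sq_nonneg (μ * ν)) hd.le]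
  have hfac : (r * μ - γ) ^ 2 - ψ ^ 2 * (ν ^ 2 + r ^ 2 * σ ^ 2)
      = d * (r - (μ * γ + ψ * w) / d) * (r - (μ * γ - ψ * w) / d) := by
    field_simp
    linear_combination ψ ^ 2 * hw2
  rw [sub_add_mul_sqrt_eq_zero_iff hψ.le, ← sub_eq_zero (a := (r * μ - γ) ^ 2), hfac]
  constructor
  · rintro ⟨hu, hroot⟩
    rcases mul_eq_zero.1 hroot with h0 | h1
    · exact sub_eq_zero.1 ((mul_eq_zero.1 h0).resolve_left hd.ne')
    · rw [sub_eq_zero.1 h1] at hu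
      have hneg : ((μ * γ - ψ * w) / d * μ - γ) * d = ψ * (γ * σ ^ 2 * ψ - μ * w) := by
        field_simp
        ring
      nlinarith [mul_nonneg hu hd.le, mul_pos hψ (sub_pos.2 hμw)]
  · rintro rfl
    have hpos : ((μ * γ + ψ * w) / d * μ - γ) * d = ψ * (μ * w + γ * σ ^ 2 * ψ) := by
      field_simp
      ring
    exact ⟨(mul_nonneg_iff_of_pos_right hd).1 (hpos ▸ by positivity), by simp⟩

end CapitalEquation

theorem R0_gaussian_ES_general
    {Ω : Type*} [MeasurableSpace Ω] (P : Measure Ω)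
    (α : ℝ)
    (q : ℝ) (hq : stdNormalCDF q = 1 - α)
    (γ ν μ σ : ℝ) (hγ : 0 < γ) (hν : 0 < ν) (hσ : 0 < σ)
    (X1 Z1 : Ω → ℝ)
    (hX : P.map X1 = gaussianReal γ (ν ^ 2).toNNReal)
    (hZ : P.map Z1 = gaussianReal μ (σ ^ 2).toNNReal)
    (hindep : IndepFun X1 Z1 P) :
    let ψ := stdNormalPDF q / α
    (σ * ψ < μ →
      (let R0 := (μ * γ + ψ * Real.sqrt (γ^2 * σ^2 + μ^2 * ν^2 - σ^2 * ν^2 * ψ^2))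
          / (μ^2 - σ^2 * ψ^2)
       0 < R0 ∧ ES P α (fun ω => R0 * Z1 ω - X1 ω) = 0 ∧
       ∀ r : ℝ, 0 < r → ES P α (fun ω => r * Z1 ω - X1 ω) = 0 → r = R0))
    ∧ (μ ≤ σ * ψ →
        ∀ r : ℝ, 0 < r → ES P α (fun ω => r * Z1 ω - X1 ω) ≠ 0) := by
  intro ψ
  have hψ : 0 < ψ := div_pos (stdNormalPDF_pos q) (by linarith [stdNormalCDF_lt_one q])
  have hES (r : ℝ) :
      ES P α (fun ω => r * Z1 ω - X1 ω) = γ - r * μ + ψ * √(ν ^ 2 + r ^ 2 * σ ^ 2) := by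
    rw [ES_of_map_eq_gaussianReal (by simp [hν.ne'])
      (map_const_mul_sub_eq_gaussianReal hindep hX hZ r) hq, NNReal.coe_add, NNReal.coe_mul,
      NNReal.coe_mk, Real.coe_toNNReal _ (sq_nonneg σ), Real.coe_toNNReal _ (sq_nonneg ν)]
    simp only [ψ]
    ring
  refine ⟨fun h => ?_, fun h r hr => (hES r).symm ▸ (sub_add_mul_sqrt_pos hγ hψ.le h hr.le).ne'⟩
  simp only [hES, sub_add_mul_sqrt_eq_zero_iff_eq_gaussianESCapital hγ hσ hψ h]
  exact ⟨gaussianESCapital_pos hγ hσ.le hψ.le h, rfl, fun r _ => id⟩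

/-- the Expected-Shortfall capital requirement in the Gaussian
model: explicit unique positive solution if `μ > σ·ψ`, and no positive
solution if `μ ≤ σ·ψ`, where `ψ = φ(Φ⁻¹(1−α))/α`. -/
theorem R0_gaussian_ES
    {Ω : Type*} [MeasurableSpace Ω] (P : Measure Ω) [IsProbabilityMeasure P]
    (α : ℝ) (hα : α ∈ Ioo (0:ℝ) 1)
    (q : ℝ) (hq : stdNormalCDF q = 1 - α)
    (γ ν μ σ : ℝ) (hγ : 0 < γ) (hν : 0 < ν) (hμ : 0 < μ) (hσ : 0 < σ)
    (X1 Z1 : Ω → ℝ) (hX1m : Measurable X1) (hZ1m : Measurable Z1)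
    (hX : P.map X1 = gaussianReal γ (ν ^ 2).toNNReal)
    (hZ : P.map Z1 = gaussianReal μ (σ ^ 2).toNNReal)
    (hindep : IndepFun X1 Z1 P) :
    let ψ := stdNormalPDF q / α
    (σ * ψ < μ →
      (let R0 := (μ * γ + ψ * Real.sqrt (γ^2 * σ^2 + μ^2 * ν^2 - σ^2 * ν^2 * ψ^2))
          / (μ^2 - σ^2 * ψ^2)
       0 < R0 ∧ ES P α (fun ω => R0 * Z1 ω - X1 ω) = 0 ∧
       ∀ r : ℝ, 0 < r → ES P α (fun ω => r * Z1 ω - X1 ω) = 0 → r = R0))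
    ∧ (μ ≤ σ * ψ →
        ∀ r : ℝ, 0 < r → ES P α (fun ω => r * Z1 ω - X1 ω) ≠ 0) :=
  R0_gaussian_ES_general P α q hq γ ν μ σ hγ hν hσ X1 Z1 hX hZ hindep
end
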